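/- arXiv:2508.14865 — 2 statements merged into one kernel-verified Lean document; each statement's English description precedes it below -/
import Mathlib

section
/- For a nontrivial finite cyclic group G of order n with generator set S, the Wiener index of the generator graph satisfies W(Γ(G)) = |S|²/2 − (2n−1)|S|/2 + n² − n. -/
/-- The generator graph of a group: vertices are group elements, two distinct
vertices are adjacent iff at least one of them generates the group. -/
def genGraph (G : Type*) [Group G] : SimpleGraph G where
  Adj x y := x ≠ y ∧ (Subgroup.zpowers x = ⊤ ∨ Subgroup.zpowers y = ⊤)
  symm := by
    constructor
    intro x y h
    exact ⟨h.1.symm, h.2.symm⟩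
  loopless := by
    constructor
    intro x h
    exact h.1 rfl

noncomputable instance {G : Type*} [Group G] [Fintype G] (x : G) :
    Fintype ((genGraph G).neighborSet x) := Fintype.ofFinite _

-- The set of generators of `G`, as a finset.
open Classical in
noncomputable def gens (G : Type*) [Group G] [Fintype G] : Finset G :=
  Finset.univ.filter fun x => Subgroup.zpowers x = ⊤

/-- The Wiener index: the sum of distances over all unordered pairs of distinct
vertices (computed as half the sum over ordered pairs). -/
noncomputable def wiener {V : Type*} [Fintype V] (Γ : SimpleGraph V) : ℝ :=
  (∑ u : V, ∑ v : V, (Γ.dist u v : ℝ)) / 2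

open Finset in
lemma mem_gens_iff {G : Type*} [Group G] [Fintype G] (x : G) :
    x ∈ gens G ↔ Subgroup.zpowers x = ⊤ := by
  classical simp [gens]

lemma dist_gen {G : Type*} [Group G] [Fintype G] {u v : G}
    (hu : Subgroup.zpowers u = ⊤ ∨ Subgroup.zpowers v = ⊤) (hne : u ≠ v) :
    (genGraph G).dist u v = 1 :=
  SimpleGraph.dist_eq_one_iff_adj.mpr ⟨hne, hu⟩

lemma dist_nongen {G : Type*} [Group G] [Fintype G] [IsCyclic G] {u v : G}
    (hu : Subgroup.zpowers u ≠ ⊤) (hv : Subgroup.zpowers v ≠ ⊤) (hne : u ≠ v) :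
    (genGraph G).dist u v = 2 := by
  obtain ⟨g, hg⟩ := IsCyclic.exists_generator (α := G)
  have hgt : Subgroup.zpowers g = ⊤ := by
    ext x; simp [hg x]
  have hgu : u ≠ g := fun h => hu (h ▸ hgt)
  have hgv : g ≠ v := fun h => hv (h ▸ hgt)
  have h1 : (genGraph G).Adj u g := ⟨hgu, Or.inr hgt⟩
  have h2 : (genGraph G).Adj g v := ⟨hgv, Or.inl hgt⟩
  have hle : (genGraph G).dist u v ≤ 2 := by
    have := SimpleGraph.dist_le (h1.toWalk.append h2.toWalk)
    simpa using this
  have hreach : (genGraph G).Reachable u v :=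
    ⟨(h1.toWalk.append h2.toWalk)⟩
  have hpos : 0 < (genGraph G).dist u v := hreach.pos_dist_of_ne hne
  have hne1 : (genGraph G).dist u v ≠ 1 := by
    intro h
    exact (SimpleGraph.dist_eq_one_iff_adj.mp h).2.elim hu hv
  omega


theorem stmt11 {G : Type*} [Group G] [Fintype G] [IsCyclic G] [Nontrivial G] :
    wiener (genGraph G) =
      ((gens G).card : ℝ) ^ 2 / 2
        - (2 * (Fintype.card G : ℝ) - 1) * ((gens G).card : ℝ) / 2
        + (Fintype.card G : ℝ) ^ 2 - (Fintype.card G : ℝ) := by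
  classical
  set n : ℝ := (Fintype.card G : ℝ)
  set s : ℝ := ((gens G).card : ℝ)
  have hsum : ∀ u : G, ∑ v : G, ((genGraph G).dist u v : ℝ)
      = if u ∈ gens G then n - 1 else 2 * n - s - 2 := by
    intro u
    by_cases hu : u ∈ gens G
    · rw [if_pos hu]
      have : ∀ v : G, ((genGraph G).dist u v : ℝ) = if v = u then 0 else 1 := by
        intro v
        by_cases h : v = u
        · simp [h]
        · rw [dist_gen (Or.inl ((mem_gens_iff u).mp hu)) (Ne.symm h)]; simp [h]
      rw [Finset.sum_congr rfl fun v _ => this v]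
      have h2 : ∀ v : G, (if v = u then (0:ℝ) else 1) = 1 - if v = u then 1 else 0 := by
        intro v; split_ifs <;> norm_num
      rw [Finset.sum_congr rfl fun v _ => h2 v, Finset.sum_sub_distrib,
        Finset.sum_ite_eq' Finset.univ u (fun _ => (1:ℝ)), if_pos (Finset.mem_univ u),
        Finset.sum_const, Finset.card_univ]
      simp [n]
    · rw [if_neg hu]
      have : ∀ v : G, ((genGraph G).dist u v : ℝ)
          = if v = u then 0 else if v ∈ gens G then 1 else 2 := by
        intro v
        by_cases h : v = u
        · simp [h]
        · rw [if_neg h]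
          by_cases hv : v ∈ gens G
          · rw [dist_gen (Or.inr ((mem_gens_iff v).mp hv)) (Ne.symm h), if_pos hv]; norm_num
          · rw [dist_nongen (fun ht => hu ((mem_gens_iff u).mpr ht))
              (fun ht => hv ((mem_gens_iff v).mpr ht)) (Ne.symm h), if_neg hv]; norm_num
      rw [Finset.sum_congr rfl fun v _ => this v]
      have h2 : ∀ v : G, (if v = u then (0:ℝ) else if v ∈ gens G then 1 else 2)
          = (if v ∈ gens G then 1 else 2) - if v = u then 2 else 0 := by
        intro v
        by_cases h : v = u
        · subst h; simp [hu]
        · simp [h]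
      rw [Finset.sum_congr rfl fun v _ => h2 v, Finset.sum_sub_distrib,
        Finset.sum_ite_eq' Finset.univ u (fun _ => (2:ℝ)), if_pos (Finset.mem_univ u),
        Finset.sum_ite, Finset.sum_const, Finset.sum_const]
      have hf1 : Finset.univ.filter (fun v => v ∈ gens G) = gens G := by
        simp
      have hf2 : (Finset.univ.filter (fun v => ¬ v ∈ gens G)) = Finset.univ \ gens G := by
        ext v; simp
      have hle : (gens G).card ≤ Fintype.card G := by
        simpa using Finset.card_le_card (Finset.subset_univ (gens G))
      rw [hf1, hf2, Finset.card_sdiff_of_subset (Finset.subset_univ _), Finset.card_univ]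
      simp only [nsmul_eq_mul]
      push_cast [hle]
      ring
  rw [wiener, Finset.sum_congr rfl fun u _ => hsum u]
  rw [Finset.sum_ite, Finset.sum_const, Finset.sum_const]
  have hf1 : Finset.univ.filter (fun v => v ∈ gens G) = gens G := by
    simp
  have hf2 : (Finset.univ.filter (fun v => ¬ v ∈ gens G)) = Finset.univ \ gens G := by
    ext v; simp
  have hle : (gens G).card ≤ Fintype.card G := by
    simpa using Finset.card_le_card (Finset.subset_univ (gens G))
  rw [hf1, hf2, Finset.card_sdiff_of_subset (Finset.subset_univ _), Finset.card_univ]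
  simp only [nsmul_eq_mul]
  push_cast [hle]
  ring
end

section
/- Let G be a nontrivial finite cyclic group of order n. The metric dimension of the generator graph Γ(G) equals n−1 if n is prime, and equals n−2 otherwise. -/
-- The metric dimension of a graph: the least cardinality of a resolving set,
-- i.e. a set `W` of vertices such that distinct vertices have distinct
-- vectors of distances to the elements of `W`.
noncomputable def metricDim {V : Type*} [Fintype V] (Γ : SimpleGraph V) : ℕ :=
  sInf {k | ∃ W : Finset V, W.card = k ∧
    ∀ u v : V, (∀ w ∈ W, Γ.dist u w = Γ.dist v w) → u = v}



open Classical Subgroup SimpleGraph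
set_option linter.unusedSectionVars false

section aux
variable {G : Type*} [Group G] [Fintype G] [IsCyclic G] [Nontrivial G]

lemma exists_gen' : ∃ g : G, zpowers g = ⊤ := by
  obtain ⟨g, hg⟩ := IsCyclic.exists_generator (α := G)
  exact ⟨g, (zpowers g).eq_top_iff'.mpr hg⟩

lemma genAdj {x y : G} (hxy : x ≠ y) (h : zpowers x = ⊤ ∨ zpowers y = ⊤) :
    (genGraph G).Adj x y := ⟨hxy, h⟩

lemma genGraph_connected : (genGraph G).Connected := by
  obtain ⟨g, hg⟩ := exists_gen' (G := G)
  rw [SimpleGraph.connected_iff]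
  refine ⟨fun x y => ?_, ⟨1⟩⟩
  have hx : (genGraph G).Reachable x g := by
    by_cases h : x = g
    · subst h; exact Reachable.refl x
    · exact (genAdj h (Or.inr hg)).reachable
  have hy : (genGraph G).Reachable g y := by
    by_cases h : g = y
    · subst h; exact Reachable.refl g
    · exact (genAdj h (Or.inl hg)).reachable
  exact hx.trans hy

lemma dist_self_zero (x : G) : (genGraph G).dist x x = 0 := by simp

lemma dist_eq_zero_iff' {x y : G} : (genGraph G).dist x y = 0 ↔ x = y :=
  (genGraph_connected (G := G)).dist_eq_zero_iff

lemma dist_eq_one {x y : G} (hxy : x ≠ y) (h : zpowers x = ⊤ ∨ zpowers y = ⊤) :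
    (genGraph G).dist x y = 1 :=
  SimpleGraph.dist_eq_one_iff_adj.mpr (genAdj hxy h)

lemma dist_eq_two {x y : G} (hxy : x ≠ y) (hx : zpowers x ≠ ⊤) (hy : zpowers y ≠ ⊤) :
    (genGraph G).dist x y = 2 := by
  obtain ⟨g, hg⟩ := exists_gen' (G := G)
  have h1 : (genGraph G).dist x y ≤ 2 := by
    have := (genGraph_connected (G := G)).dist_triangle (u := x) (v := g) (w := y)
    have hxg : x ≠ g := fun h => hx (h ▸ hg)
    have hgy : g ≠ y := fun h => hy (h ▸ hg)
    rw [dist_eq_one hxg (Or.inr hg), dist_eq_one hgy (Or.inl hg)] at this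
    exact this
  have h0 : (genGraph G).dist x y ≠ 0 := fun h => hxy (dist_eq_zero_iff'.mp h)
  have h2 : (genGraph G).dist x y ≠ 1 := fun h =>
    ((SimpleGraph.dist_eq_one_iff_adj.mp h).2).elim hx hy
  omega

end aux

open Classical Subgroup SimpleGraph in
set_option maxHeartbeats 1000000 in
theorem stmt19 {G : Type*} [Group G] [Fintype G] [IsCyclic G] [Nontrivial G] :
    metricDim (genGraph G) =
      if (Fintype.card G).Prime then Fintype.card G - 1 else Fintype.card G - 2 := by
  classical
  obtain ⟨g, hg⟩ := exists_gen' (G := G)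
  have hone : Subgroup.zpowers (1:G) ≠ ⊤ := by
    rw [Subgroup.zpowers_one_eq_bot]
    exact bot_ne_top
  have hg1 : g ≠ 1 := fun h => hone (h ▸ hg)
  have hn2 : 2 ≤ Fintype.card G := Fintype.one_lt_card
  have hkey : ∀ (W : Finset G) (u v : G),
      (∀ w ∈ W, (genGraph G).dist u w = (genGraph G).dist v w) → u ≠ v →
      u ∉ W ∧ v ∉ W := by
    intro W u v h hne
    constructor
    · intro hu
      have h2 := h u hu
      rw [dist_self_zero] at h2
      exact hne ((dist_eq_zero_iff'.mp h2.symm).symm)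
    · intro hv
      have h2 := h v hv
      rw [dist_self_zero] at h2
      exact hne (dist_eq_zero_iff'.mp h2)
  by_cases hp : (Fintype.card G).Prime
  · rw [if_pos hp]
    haveI : Fact (Fintype.card G).Prime := ⟨hp⟩
    have hall : ∀ x : G, x ≠ 1 → zpowers x = ⊤ := fun x hx =>
      zpowers_eq_top_of_prime_card (p := Fintype.card G) Nat.card_eq_fintype_card hx
    have hadj : ∀ x y : G, x ≠ y → (genGraph G).dist x y = 1 := by
      intro x y hxy
      by_cases hx1 : x = 1
      · exact dist_eq_one hxy (Or.inr (hall y (fun h => hxy (hx1.trans h.symm))))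
      · exact dist_eq_one hxy (Or.inl (hall x hx1))
    apply le_antisymm
    · apply Nat.sInf_le
      refine ⟨Finset.univ.erase g, ?_, ?_⟩
      · rw [Finset.card_erase_of_mem (Finset.mem_univ g), Finset.card_univ]
      · intro u v h
        by_contra hne
        obtain ⟨hu, hv⟩ := hkey _ u v h hne
        simp only [Finset.mem_erase, Finset.mem_univ, and_true, not_not] at hu hv
        exact hne (hu.trans hv.symm)
    · refine le_csInf ⟨Fintype.card G - 1, Finset.univ.erase g, ?_, ?_⟩ ?_
      · rw [Finset.card_erase_of_mem (Finset.mem_univ g), Finset.card_univ]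
      · intro u v h
        by_contra hne
        obtain ⟨hu, hv⟩ := hkey _ u v h hne
        simp only [Finset.mem_erase, Finset.mem_univ, and_true, not_not] at hu hv
        exact hne (hu.trans hv.symm)
      · rintro k ⟨W, hWc, hres⟩
        by_contra hlt
        push_neg at hlt
        have hkn : W.card ≤ Fintype.card G := W.card_le_univ.trans_eq Finset.card_univ
        have hcc : 1 < Wᶜ.card := by rw [Finset.card_compl]; omega
        obtain ⟨u, hu, v, hv, huv⟩ := Finset.one_lt_card.mp hcc
        rw [Finset.mem_compl] at hu hv
        refine huv (hres u v ?_)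
        intro w hw
        rw [hadj u w (fun h => hu (h ▸ hw)), hadj v w (fun h => hv (h ▸ hw))]
  · rw [if_neg hp]
    have hn1 : Fintype.card G ≠ 1 := by omega
    set p := (Fintype.card G).minFac with hpdef
    have hpp : p.Prime := Nat.minFac_prime hn1
    have hpd : p ∣ Fintype.card G := Nat.minFac_dvd _
    have hplt : p < Fintype.card G :=
      lt_of_le_of_ne (Nat.le_of_dvd (by omega) hpd) (fun h => hp (h ▸ hpp))
    haveI : Fact p.Prime := ⟨hpp⟩
    obtain ⟨x₀, hx₀⟩ := exists_prime_orderOf_dvd_card p hpd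
    have hx₀gen : zpowers x₀ ≠ ⊤ := by
      intro h
      have h2 : Nat.card (zpowers x₀) = orderOf x₀ := Nat.card_zpowers x₀
      rw [h, Subgroup.card_top, Nat.card_eq_fintype_card, hx₀] at h2
      omega
    have hx₀1 : x₀ ≠ 1 := by
      intro h
      rw [h, orderOf_one] at hx₀
      exact hpp.one_lt.ne' hx₀.symm
    have hgx₀ : g ≠ x₀ := fun h => hx₀gen (h ▸ hg)
    set W : Finset G := (Finset.univ.erase g).erase x₀ with hWdef
    have hWcard : W.card = Fintype.card G - 2 := by
      rw [hWdef, Finset.card_erase_of_mem, Finset.card_erase_of_mem (Finset.mem_univ g),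
        Finset.card_univ]
      · omega
      · exact Finset.mem_erase.mpr ⟨fun h => hgx₀ h.symm, Finset.mem_univ x₀⟩
    have h1W : (1:G) ∈ W :=
      Finset.mem_erase.mpr ⟨hx₀1.symm, Finset.mem_erase.mpr ⟨hg1.symm, Finset.mem_univ 1⟩⟩
    have hres' : ∀ u v : G, (∀ w ∈ W, (genGraph G).dist u w = (genGraph G).dist v w) → u = v := by
      intro u v h
      by_contra hne
      obtain ⟨hu, hv⟩ := hkey _ u v h hne
      simp only [hWdef, Finset.mem_erase, Finset.mem_univ, and_true, not_and_or, not_not] at hu hv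
      have hd := h 1 h1W
      have dg : (genGraph G).dist g 1 = 1 := dist_eq_one hg1 (Or.inl hg)
      have dx : (genGraph G).dist x₀ 1 = 2 := dist_eq_two hx₀1 hx₀gen hone
      rcases hu with hu | hu <;> rcases hv with hv | hv <;> subst hu <;> subst hv <;>
        first
        | exact hne rfl
        | (rw [dg, dx] at hd; omega)
    apply le_antisymm
    · exact Nat.sInf_le ⟨W, hWcard, hres'⟩
    · refine le_csInf ⟨Fintype.card G - 2, W, hWcard, hres'⟩ ?_
      rintro k ⟨W', hWc, hres⟩
      have hkn : W'.card ≤ Fintype.card G := W'.card_le_univ.trans_eq Finset.card_univ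
      have hA : (W'ᶜ.filter fun x => zpowers x = ⊤).card ≤ 1 := by
        rw [Finset.card_le_one]
        intro a ha b hb
        rw [Finset.mem_filter, Finset.mem_compl] at ha hb
        refine hres a b ?_
        intro w hw
        rw [dist_eq_one (fun h => ha.1 (by rw [h]; exact hw)) (Or.inl ha.2),
          dist_eq_one (fun h => hb.1 (by rw [h]; exact hw)) (Or.inl hb.2)]
      have hB : (W'ᶜ.filter fun x => ¬ zpowers x = ⊤).card ≤ 1 := by
        rw [Finset.card_le_one]
        intro a ha b hb
        rw [Finset.mem_filter, Finset.mem_compl] at ha hb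
        refine hres a b ?_
        intro w hw
        by_cases hwg : zpowers w = ⊤
        · rw [dist_eq_one (fun h => ha.1 (by rw [h]; exact hw)) (Or.inr hwg),
            dist_eq_one (fun h => hb.1 (by rw [h]; exact hw)) (Or.inr hwg)]
        · rw [dist_eq_two (fun h => ha.1 (by rw [h]; exact hw)) ha.2 hwg,
            dist_eq_two (fun h => hb.1 (by rw [h]; exact hw)) hb.2 hwg]
      have hsum := Finset.card_filter_add_card_filter_not
        (s := W'ᶜ) (p := fun x => zpowers x = ⊤)
      have hcc : W'ᶜ.card = Fintype.card G - W'.card := Finset.card_compl W'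
      omega
end
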